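/- arXiv:0812.1898 — 2 statements merged into one kernel-verified Lean document; each statement's English description precedes it below -/
import Mathlib

section
/- (Universality: every galactic space is the galactic projection of a K-metric space.) Let (δ, Δ) be galactic space data on a type F. Then there exists a K-valued distance d : F → F → K satisfying the general metric rule (d x x = 0; 0 < d x y for x ≠ y; d x y = d y x; d x z ≤ d x y + d y z) such that: (a) for all x y with δ x y ≠ ⊤, the element d x y - f ((δ x y).toReal) is infinitesimal (so the standard part of d x y equals the real value of δ x y); and (b) for all x y, the element d x y - Δ x y is limited (so d x y lies in the galaxy Δ x y). -/
open ENNReal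

variable {K : Type*} [Field K] [LinearOrder K] [IsStrictOrderedRing K]

/-- `s : K` is infinitesimal: `|s| < f r` for every real `r > 0`. -/
def IsInfinitesimal (f : ℝ →+* K) (s : K) : Prop := ∀ r : ℝ, 0 < r → |s| < f r

/-- `s : K` is limited: `|s| ≤ f r` for some real `r > 0`. -/
def IsLimited (f : ℝ →+* K) (s : K) : Prop := ∃ r : ℝ, 0 < r ∧ |s| ≤ f r

/-- Galactic space data on a type `F`: an extended distance `δ` together with a
galaxy-valued distance `Δ` between metric components, encoded on points. -/
structure GalacticData (K : Type*) [Field K] [LinearOrder K] [IsStrictOrderedRing K] (f : ℝ →+* K) (F : Type*) where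
  δ : F → F → ℝ≥0∞
  Δ : F → F → K
  δ_self : ∀ x, δ x x = 0
  δ_pos : ∀ x y, x ≠ y → 0 < δ x y
  δ_symm : ∀ x y, δ x y = δ y x
  δ_triangle : ∀ x y z, δ x z ≤ δ x y + δ y z
  Δ_congr : ∀ x x' y y', δ x x' ≠ ⊤ → δ y y' ≠ ⊤ → IsLimited f (Δ x y - Δ x' y')
  Δ_symm : ∀ x y, IsLimited f (Δ x y - Δ y x)
  Δ_limited_iff : ∀ x y, IsLimited f (Δ x y) ↔ δ x y ≠ ⊤
  Δ_pos : ∀ x y, δ x y = ⊤ → 0 < Δ x y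
  Δ_triangle : ∀ x y z, Δ x z ≤ Δ x y + Δ y z ∨ IsLimited f (Δ x z - (Δ x y + Δ y z))

/-!
The limited elements of `K` form a ℚ-subspace; projecting along it onto a complement gives an
additive map `galaxyRep` that picks one representative in every galaxy and kills limited
elements. So the axioms of `Δ`, which hold up to limited errors, hold exactly for `galaxyRep ∘ Δ`,
and `galaxyRep` keeps positive unlimited elements above every real number. The metric is `f ∘ δ`
inside a metric component and `galaxyRep ∘ Δ` between components; in the triangle inequality, an
unlimited side dominates any real one.
-/

variable (f : ℝ →+* K)

theorem RingHom.real_monotone : Monotone f :=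
  ringHom_monotone (fun _ ↦ Real.isSquare_iff.mpr) f

theorem RingHom.real_strictMono : StrictMono f :=
  (f.real_monotone).strictMono_of_injective f.injective

theorem RingHom.real_map_pos {r : ℝ} (hr : 0 < r) : 0 < f r := by
  simpa using f.real_strictMono hr

theorem RingHom.real_map_nonneg {r : ℝ} (hr : 0 ≤ r) : 0 ≤ f r := by
  simpa using f.real_monotone hr

theorem RingHom.abs_real_map_le {t r : ℝ} (h : |t| ≤ r) : |f t| ≤ f r := by
  obtain ⟨h₁, h₂⟩ := abs_le.mp h
  exact abs_le.mpr ⟨by simpa using f.real_monotone h₁, f.real_monotone h₂⟩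

variable {f}

theorem isLimited_map (t : ℝ) : IsLimited f (f t) :=
  ⟨|t| + 1, by positivity, f.abs_real_map_le (by linarith)⟩

theorem isLimited_zero : IsLimited f (0 : K) := by
  simpa using isLimited_map (f := f) 0

theorem IsLimited.add {a b : K} (ha : IsLimited f a) (hb : IsLimited f b) :
    IsLimited f (a + b) := by
  obtain ⟨r, hr, har⟩ := ha
  obtain ⟨s, hs, hbs⟩ := hb
  refine ⟨r + s, by positivity, ?_⟩
  rw [map_add]
  exact (abs_add_le a b).trans (add_le_add har hbs)

omit [IsStrictOrderedRing K] in
theorem IsLimited.neg {a : K} (ha : IsLimited f a) : IsLimited f (-a) := by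
  simpa only [IsLimited, abs_neg] using ha

theorem IsLimited.sub {a b : K} (ha : IsLimited f a) (hb : IsLimited f b) :
    IsLimited f (a - b) := by
  simpa only [sub_eq_add_neg] using ha.add hb.neg

theorem IsLimited.map_mul {a : K} (t : ℝ) (ha : IsLimited f a) : IsLimited f (f t * a) := by
  obtain ⟨r, hr, har⟩ := ha
  refine ⟨(|t| + 1) * r, by positivity, ?_⟩
  rw [abs_mul, _root_.map_mul]
  exact mul_le_mul (f.abs_real_map_le (by linarith)) har (abs_nonneg a)
    (f.real_map_nonneg (by positivity))

theorem lt_of_not_isLimited {s : K} (hs : 0 < s) (hl : ¬ IsLimited f s) (r : ℝ) : f r < s := by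
  by_contra! h
  exact hl ⟨|r| + 1, by positivity,
    (abs_of_pos hs).trans_le (h.trans (f.real_monotone (by linarith [le_abs_self r])))⟩

variable (f)

def limitedSubmodule : Submodule ℚ K where
  carrier := {s | IsLimited f s}
  add_mem' := IsLimited.add
  zero_mem' := isLimited_zero
  smul_mem' q a ha := by
    rw [Rat.smul_def, ← map_ratCast f]
    exact ha.map_mul (q : ℝ)

noncomputable def galaxyRep : K →ₗ[ℚ] K :=
  (limitedSubmodule f).exists_isCompl.choose.projection _
    (limitedSubmodule f).exists_isCompl.choose_spec.symm

variable {f}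

theorem isLimited_sub_galaxyRep (s : K) : IsLimited f (s - galaxyRep f s) :=
  Submodule.sub_projection_mem (limitedSubmodule f).exists_isCompl.choose_spec.symm s

theorem galaxyRep_eq_zero {s : K} (hs : IsLimited f s) : galaxyRep f s = 0 :=
  Submodule.projection_apply_of_mem_right
    (limitedSubmodule f).exists_isCompl.choose_spec.symm hs

theorem galaxyRep_eq_of_isLimited_sub {a b : K} (h : IsLimited f (a - b)) :
    galaxyRep f a = galaxyRep f b := by
  rw [← sub_eq_zero, ← map_sub]
  exact galaxyRep_eq_zero h

theorem lt_galaxyRep_of_not_isLimited {s : K} (hs : 0 < s) (hl : ¬ IsLimited f s) (r : ℝ) :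
    f r < galaxyRep f s := by
  obtain ⟨r₀, -, hr₀⟩ := isLimited_sub_galaxyRep (f := f) s
  have := lt_of_not_isLimited hs hl (r + r₀)
  rw [map_add] at this
  linarith [le_abs_self (s - galaxyRep f s)]

theorem galaxyRep_nonneg {s : K} (hs : 0 ≤ s) : 0 ≤ galaxyRep f s := by
  by_cases hl : IsLimited f s
  · rw [galaxyRep_eq_zero hl]
  · have hs' : 0 < s := hs.lt_of_ne (by rintro rfl; exact hl isLimited_zero)
    simpa using (lt_galaxyRep_of_not_isLimited hs' hl 0).le

theorem galaxyRep_le_galaxyRep {a b c : K} (hc : IsLimited f c) (h : a ≤ b + c) :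
    galaxyRep f a ≤ galaxyRep f b := by
  have hσ : galaxyRep f (b - a + c) = galaxyRep f (b - a) :=
    galaxyRep_eq_of_isLimited_sub (by simpa using hc)
  have := galaxyRep_nonneg (f := f) (show 0 ≤ b - a + c by linarith)
  rw [hσ, map_sub] at this
  linarith

namespace GalacticData

variable {F : Type*} (G : GalacticData K f F)

theorem δ_self_ne_top (x : F) : G.δ x x ≠ ⊤ := by
  simp [G.δ_self]

theorem δ_ne_top_trans {x y z : F} (hxy : G.δ x y ≠ ⊤) (hyz : G.δ y z ≠ ⊤) :
    G.δ x z ≠ ⊤ :=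
  ne_top_of_le_ne_top (add_ne_top.mpr ⟨hxy, hyz⟩) (G.δ_triangle x y z)

theorem exists_Δ_triangle (x y z : F) :
    ∃ c, IsLimited f c ∧ G.Δ x z ≤ G.Δ x y + G.Δ y z + c := by
  rcases G.Δ_triangle x y z with h | h
  · exact ⟨0, isLimited_zero, by simpa using h⟩
  · exact ⟨_, h, by simp⟩

noncomputable def galaxyDist (x y : F) : K := galaxyRep f (G.Δ x y)

theorem galaxyDist_comm (x y : F) : G.galaxyDist x y = G.galaxyDist y x :=
  galaxyRep_eq_of_isLimited_sub (G.Δ_symm x y)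

theorem galaxyDist_congr {x x' y y' : F} (hx : G.δ x x' ≠ ⊤) (hy : G.δ y y' ≠ ⊤) :
    G.galaxyDist x y = G.galaxyDist x' y' :=
  galaxyRep_eq_of_isLimited_sub (G.Δ_congr x x' y y' hx hy)

theorem galaxyDist_triangle (x y z : F) :
    G.galaxyDist x z ≤ G.galaxyDist x y + G.galaxyDist y z := by
  obtain ⟨c, hc, h⟩ := G.exists_Δ_triangle x y z
  simpa only [galaxyDist, map_add] using galaxyRep_le_galaxyRep hc h

theorem lt_galaxyDist_of_δ_eq_top {x y : F} (h : G.δ x y = ⊤) (r : ℝ) :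
    f r < G.galaxyDist x y :=
  lt_galaxyRep_of_not_isLimited (G.Δ_pos x y h) (fun hl ↦ (G.Δ_limited_iff x y).mp hl h) r

theorem isLimited_galaxyDist_sub_Δ (x y : F) : IsLimited f (G.galaxyDist x y - G.Δ x y) := by
  simpa [galaxyDist] using (isLimited_sub_galaxyRep (G.Δ x y)).neg

open Classical in
noncomputable def liftDist (x y : F) : K :=
  if G.δ x y = ⊤ then G.galaxyDist x y else f (G.δ x y).toReal

theorem liftDist_of_ne_top {x y : F} (h : G.δ x y ≠ ⊤) :
    G.liftDist x y = f (G.δ x y).toReal :=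
  if_neg h

theorem liftDist_of_eq_top {x y : F} (h : G.δ x y = ⊤) : G.liftDist x y = G.galaxyDist x y :=
  if_pos h

theorem lt_liftDist_of_δ_eq_top {x y : F} (h : G.δ x y = ⊤) (r : ℝ) :
    f r < G.liftDist x y := by
  rw [G.liftDist_of_eq_top h]
  exact G.lt_galaxyDist_of_δ_eq_top h r

theorem liftDist_nonneg (x y : F) : 0 ≤ G.liftDist x y := by
  by_cases h : G.δ x y = ⊤
  · simpa using (G.lt_liftDist_of_δ_eq_top h 0).le
  · rw [G.liftDist_of_ne_top h]
    exact f.real_map_nonneg toReal_nonneg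

theorem liftDist_self (x : F) : G.liftDist x x = 0 := by
  rw [G.liftDist_of_ne_top (G.δ_self_ne_top x), G.δ_self, toReal_zero, map_zero]

theorem liftDist_pos {x y : F} (hxy : x ≠ y) : 0 < G.liftDist x y := by
  by_cases h : G.δ x y = ⊤
  · simpa using G.lt_liftDist_of_δ_eq_top h 0
  · rw [G.liftDist_of_ne_top h]
    exact f.real_map_pos (toReal_pos (G.δ_pos x y hxy).ne' h)

theorem liftDist_comm (x y : F) : G.liftDist x y = G.liftDist y x := by
  simp only [liftDist, G.δ_symm x y, G.galaxyDist_comm x y]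

theorem liftDist_triangle_of_ne_top {x y z : F} (hxz : G.δ x z ≠ ⊤) :
    G.liftDist x z ≤ G.liftDist x y + G.liftDist y z := by
  rw [G.liftDist_of_ne_top hxz]
  by_cases hxy : G.δ x y = ⊤
  · linarith [G.lt_liftDist_of_δ_eq_top hxy (G.δ x z).toReal, G.liftDist_nonneg y z]
  by_cases hyz : G.δ y z = ⊤
  · linarith [G.lt_liftDist_of_δ_eq_top hyz (G.δ x z).toReal, G.liftDist_nonneg x y]
  rw [G.liftDist_of_ne_top hxy, G.liftDist_of_ne_top hyz, ← map_add]
  exact f.real_monotone (toReal_le_add (G.δ_triangle x y z) hxy hyz)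

theorem liftDist_triangle_of_eq_top {x y z : F} (hxz : G.δ x z = ⊤) :
    G.liftDist x z ≤ G.liftDist x y + G.liftDist y z := by
  rw [G.liftDist_of_eq_top hxz]
  by_cases hxy : G.δ x y = ⊤
  · by_cases hyz : G.δ y z = ⊤
    · rw [G.liftDist_of_eq_top hxy, G.liftDist_of_eq_top hyz]
      exact G.galaxyDist_triangle x y z
    · rw [G.liftDist_of_eq_top hxy,
        G.galaxyDist_congr (G.δ_self_ne_top x) (by rwa [G.δ_symm] : G.δ z y ≠ ⊤)]
      linarith [G.liftDist_nonneg y z]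
  · have hyz : G.δ y z = ⊤ := by
      by_contra hyz
      exact G.δ_ne_top_trans hxy hyz hxz
    rw [G.liftDist_of_eq_top hyz, G.galaxyDist_congr hxy (G.δ_self_ne_top z)]
    linarith [G.liftDist_nonneg x y]

theorem liftDist_triangle (x y z : F) : G.liftDist x z ≤ G.liftDist x y + G.liftDist y z := by
  by_cases hxz : G.δ x z = ⊤
  · exact G.liftDist_triangle_of_eq_top hxz
  · exact G.liftDist_triangle_of_ne_top hxz

theorem isInfinitesimal_liftDist_sub {x y : F} (h : G.δ x y ≠ ⊤) :
    IsInfinitesimal f (G.liftDist x y - f (G.δ x y).toReal) := by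
  intro r hr
  simpa [G.liftDist_of_ne_top h] using f.real_map_pos hr

theorem isLimited_liftDist_sub_Δ (x y : F) : IsLimited f (G.liftDist x y - G.Δ x y) := by
  by_cases h : G.δ x y = ⊤
  · rw [G.liftDist_of_eq_top h]
    exact G.isLimited_galaxyDist_sub_Δ x y
  · rw [G.liftDist_of_ne_top h]
    exact (isLimited_map _).sub ((G.Δ_limited_iff x y).mpr h)

end GalacticData

theorem galactic_space_is_projection_general (f : ℝ →+* K)
    {F : Type*} (G : GalacticData K f F) :
    ∃ d : F → F → K,
      (∀ x, d x x = 0) ∧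
      (∀ x y, x ≠ y → 0 < d x y) ∧
      (∀ x y, d x y = d y x) ∧
      (∀ x y z, d x z ≤ d x y + d y z) ∧
      (∀ x y, G.δ x y ≠ ⊤ → IsInfinitesimal f (d x y - f (G.δ x y).toReal)) ∧
      (∀ x y, IsLimited f (d x y - G.Δ x y)) :=
  ⟨G.liftDist, G.liftDist_self, fun _ _ ↦ G.liftDist_pos, G.liftDist_comm, G.liftDist_triangle,
    fun _ _ ↦ G.isInfinitesimal_liftDist_sub, G.isLimited_liftDist_sub_Δ⟩

/-- Every galactic space is the galactic projection of a `K`-metric space. -/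
theorem galactic_space_is_projection (f : ℝ →+* K) (hf : ¬ Function.Surjective f)
    {F : Type*} (G : GalacticData K f F) :
    ∃ d : F → F → K,
      (∀ x, d x x = 0) ∧
      (∀ x y, x ≠ y → 0 < d x y) ∧
      (∀ x y, d x y = d y x) ∧
      (∀ x y z, d x z ≤ d x y + d y z) ∧
      (∀ x y, G.δ x y ≠ ⊤ → IsInfinitesimal f (d x y - f (G.δ x y).toReal)) ∧
      (∀ x y, IsLimited f (d x y - G.Δ x y)) :=
  galactic_space_is_projection_general f G
end

section
/- (Transitions between nonstandard scalings.) Let α β : ℝ* with 0 < β ≤ α. Then there exists a unique map π_{β,α} : X_α → X_β such that π_β = π_{β,α} ∘ π_α; this map is surjective; for all x y : *X with δ_α (π_α x) (π_α y) ≠ ⊤, one has δ_β (π_β x) (π_β y) = ENNReal.ofReal (st (β/α) * (δ_α (π_α x) (π_α y)).toReal); and for 0 < γ ≤ β ≤ α one has π_{γ,α} = π_{γ,β} ∘ π_{β,α}. -/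
open Filter Hyperreal ENNReal

/-- The germ-wise extension of the distance of a metric space to the germ space
`*X = ((hyperfilter ℕ : Filter ℕ)).Germ X`, with values in the hyperreals. -/
noncomputable def hdist {X : Type*} [MetricSpace X]
    (x y : ((hyperfilter ℕ : Filter ℕ)).Germ X) : ℝ* :=
  Filter.Germ.map₂ dist x y

/-- The relation `x ≈_α y`: `α * *d x y` is infinitesimal. -/
def scaleRel {X : Type*} [MetricSpace X] (α : ℝ*)
    (x y : ((hyperfilter ℕ : Filter ℕ)).Germ X) : Prop :=
  Infinitesimal (α * hdist x y)

/-- The `α`-scaling `X_α` of `X`: the quotient of `*X` by `≈_α`. -/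
def Scaled (X : Type*) [MetricSpace X] (α : ℝ*) : Type _ :=
  Quot (scaleRel (X := X) α)

/-- The canonical projection `π_α : *X → X_α`. -/
def scaleProj {X : Type*} [MetricSpace X] (α : ℝ*)
    (x : ((hyperfilter ℕ : Filter ℕ)).Germ X) : Scaled X α :=
  Quot.mk (scaleRel α) x

/-!
Because `*d ≥ 0`, lowering the scale from `α` to `β` lowers `α * *d x y` to `β * *d x y`; so `≈_α`
refines `≈_β`, and `π_β` factors through the surjection `π_α`, which also gives uniqueness,
surjectivity and the composition law. For distances, `0 < β/α ≤ 1` has a standard part, hence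
`st (β * d) = st (β/α) * st (α * d)` whenever `α * d` is finite.
-/

open ArchimedeanClass

section OrderedField

variable {K : Type*} [Field K] [LinearOrder K] [IsStrictOrderedRing K]

lemma ArchimedeanClass.mk_mul_le_mk_mul_of_le {a b : K} (t : K) (hb : 0 ≤ b) (hba : b ≤ a) :
    mk (a * t) ≤ mk (b * t) := by
  rw [mk_mul, mk_mul]
  exact add_le_add_left (mk_antitoneOn hb (hb.trans hba) hba) _

lemma ArchimedeanClass.mk_div_nonneg_of_le {a b : K} (hb : 0 < b) (hba : b ≤ a) :
    0 ≤ mk (b / a) := by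
  have ha := hb.trans_le hba
  simpa using mk_antitoneOn (div_nonneg hb.le ha.le) zero_le_one ((div_le_one ha).mpr hba)

end OrderedField

section Scaled

variable {X : Type*} [MetricSpace X]

lemma hdist_nonneg (x y : ((hyperfilter ℕ : Filter ℕ)).Germ X) : 0 ≤ hdist x y :=
  x.inductionOn₂ y fun _ _ => Germ.coe_le.mpr (.of_forall fun _ => dist_nonneg)

lemma scaleRel.of_le {α β : ℝ*} (hβ : 0 ≤ β) (hβα : β ≤ α)
    {x y : ((hyperfilter ℕ : Filter ℕ)).Germ X} (h : scaleRel α x y) : scaleRel β x y := by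
  rw [scaleRel, infinitesimal_iff] at h ⊢
  exact h.trans_le (mk_mul_le_mk_mul_of_le _ hβ hβα)

lemma scaleProj_surjective (α : ℝ*) : Function.Surjective (scaleProj (X := X) α) :=
  Quot.exists_rep

lemma Scaled.hom_ext {α : ℝ*} {Y : Type*} {f g : Scaled X α → Y}
    (h : ∀ x, f (scaleProj α x) = g (scaleProj α x)) : f = g :=
  funext (Quot.ind h)

-- The paper's `π_{β,α}`.
def Scaled.transition {α β : ℝ*} (hβ : 0 ≤ β) (hβα : β ≤ α) : Scaled X α → Scaled X β :=
  Quot.lift (scaleProj β) fun _ _ h => Quot.sound (scaleRel.of_le hβ hβα h)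

end Scaled

/-- Transitions between nonstandard scalings: for `0 < β ≤ α` there is a unique map
`π_{β,α} : X_α → X_β` with `π_β = π_{β,α} ∘ π_α`; it is surjective, contracts the
generalized distance by the factor `st (β/α)`, and these transition maps compose. -/
theorem scaling_transition {X : Type*} [MetricSpace X]
    (α β : ℝ*) (hβ : 0 < β) (hβα : β ≤ α)
    (δα : Scaled X α → Scaled X α → ℝ≥0∞) (δβ : Scaled X β → Scaled X β → ℝ≥0∞)
    (hδα : ∀ x y : ((hyperfilter ℕ : Filter ℕ)).Germ X,
      (Infinite (α * hdist x y) → δα (scaleProj α x) (scaleProj α y) = ⊤) ∧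
      (¬ Infinite (α * hdist x y) →
        δα (scaleProj α x) (scaleProj α y) = ENNReal.ofReal (st (α * hdist x y))))
    (hδβ : ∀ x y : ((hyperfilter ℕ : Filter ℕ)).Germ X,
      (Infinite (β * hdist x y) → δβ (scaleProj β x) (scaleProj β y) = ⊤) ∧
      (¬ Infinite (β * hdist x y) →
        δβ (scaleProj β x) (scaleProj β y) = ENNReal.ofReal (st (β * hdist x y)))) :
    (∃! h : Scaled X α → Scaled X β,
      ∀ x : ((hyperfilter ℕ : Filter ℕ)).Germ X, h (scaleProj α x) = scaleProj β x) ∧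
    (∀ h : Scaled X α → Scaled X β,
      (∀ x, h (scaleProj α x) = scaleProj β x) → Function.Surjective h) ∧
    (∀ x y : ((hyperfilter ℕ : Filter ℕ)).Germ X,
      δα (scaleProj α x) (scaleProj α y) ≠ ⊤ →
      δβ (scaleProj β x) (scaleProj β y) =
        ENNReal.ofReal (st (β / α) * (δα (scaleProj α x) (scaleProj α y)).toReal)) ∧
    (∀ γ : ℝ*, 0 < γ → γ ≤ β →
      ∀ (hγα : Scaled X α → Scaled X γ) (hγβ : Scaled X β → Scaled X γ)
        (hβα' : Scaled X α → Scaled X β),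
        (∀ x, hγα (scaleProj α x) = scaleProj γ x) →
        (∀ x, hγβ (scaleProj β x) = scaleProj γ x) →
        (∀ x, hβα' (scaleProj α x) = scaleProj β x) →
        hγα = hγβ ∘ hβα') := by
  refine ⟨⟨Scaled.transition hβ.le hβα, fun _ => rfl, fun h hh => Scaled.hom_ext hh⟩,
    fun h hh => .of_comp (g := scaleProj α) fun z =>
      (scaleProj_surjective β z).imp fun x hx => (hh x).trans hx,
    fun x y hne => ?_,
    fun γ _ _ hγα hγβ hβα' h₁ h₂ h₃ => Scaled.hom_ext fun x => by simp [h₁, h₂, h₃]⟩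
  have hαfin : 0 ≤ mk (α * hdist x y) := by
    rw [← not_lt, ← infinite_iff]
    exact mt (hδα x y).1 hne
  have hβfin : ¬ Infinite (β * hdist x y) := by
    rw [infinite_iff, not_lt]
    exact hαfin.trans (mk_mul_le_mk_mul_of_le _ hβ.le hβα)
  rw [(hδβ x y).2 hβfin, (hδα x y).2 (by rwa [infinite_iff, not_lt]), st_eq, st_eq, st_eq,
    toReal_ofReal (stdPart_nonneg (mul_nonneg (hβ.le.trans hβα) (hdist_nonneg x y))),
    ← stdPart_mul (mk_div_nonneg_of_le hβ hβα) hαfin, ← mul_assoc,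
    div_mul_cancel₀ _ (hβ.trans_le hβα).ne']
end
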